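/- Let $X_1, \dots, X_n$ be independent geometric random variables, where $X_i$ has success probability $p_i \in (0,1]$, and suppose there exists $p_{\min} > 0$ with $p_i \ge p_{\min}$ for all $i$. Let $\mu = \mathbb{E}\left[\sum_{i=1}^n X_i\right] = \sum_{i=1}^n \frac{1}{p_i}$. Then for every $\varepsilon \in (0,1)$, $\Pr\left[\sum_{i=1}^n X_i > \left(1 + \frac{\varepsilon}{2}\right)\mu\right] \le e^{-p_{\min}\, \mu\, \varepsilon^2 / 24}$. -/

import Mathlib

open MeasureTheory ProbabilityTheory Real

/-!
Chernoff's method, as in Janson's bound for sums of geometric variables. Put `λ = ε / 2`,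
`u = p_min λ / (1 + λ)` and `t = -log (1 - u)`. A geometric variable with parameter `p ≥ p_min`
has `E e^{tX} = p / (p - u) = (1 - (p_min / p) λ / (1 + λ))⁻¹ ≤ (1 + λ) ^ (p_min / p)` by
Bernoulli's inequality, so by independence `E e^{t ∑ X_i} ≤ (1 + λ) ^ (p_min m)` with
`m = ∑ 1 / p_i`. As `t ≥ u`, Markov's inequality for `e^{t ∑ X_i}` bounds the tail by
`exp (-p_min m (λ - log (1 + λ)))`, and `λ - log (1 + λ) ≥ λ² / 6` for `0 ≤ λ ≤ 1 / 2`.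
-/

namespace Real

theorem sq_div_six_le_sub_log_one_add {x : ℝ} (hx0 : 0 ≤ x) (hx : x ≤ 1 / 2) :
    x ^ 2 / 6 ≤ x - log (1 + x) := by
  have hexp := quadratic_le_exp_of_nonneg (x := x - x ^ 2 / 6) (by nlinarith)
  have hlog : log (1 + x) ≤ x - x ^ 2 / 6 := (log_le_iff_le_exp (by linarith)).2 (by nlinarith)
  linarith

theorem inv_one_sub_mul_div_le_rpow {l s : ℝ} (hl : 0 ≤ l) (hs0 : 0 ≤ s) (hs1 : s ≤ 1) :
    (1 - s * (l / (1 + l)))⁻¹ ≤ (1 + l) ^ s := by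
  have hbern := rpow_one_add_le_one_add_mul_self (s := -(l / (1 + l))) (by
    rw [neg_le_neg_iff, div_le_one (by linarith)]; linarith) hs0 hs1
  have h1l : 1 + -(l / (1 + l)) = (1 + l)⁻¹ := by field_simp; ring
  rw [h1l, inv_rpow (by linarith)] at hbern
  calc (1 - s * (l / (1 + l)))⁻¹ ≤ ((1 + l) ^ s)⁻¹⁻¹ :=
        inv_anti₀ (by positivity) (by linarith)
    _ = (1 + l) ^ s := inv_inv _

theorem one_sub_mul_exp_neg_log_one_sub_lt_one {p u : ℝ} (hup : u < p) (hp1 : p ≤ 1) :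
    (1 - p) * exp (-log (1 - u)) < 1 := by
  rw [exp_neg, exp_log (by linarith), ← div_eq_mul_inv, div_lt_one (by linarith)]
  linarith

end Real

theorem MeasureTheory.Measure.le_of_forall_measure_singleton_le {α : Type*}
    [MeasurableSpace α] [Countable α] [MeasurableSingletonClass α] {μ ν : Measure α}
    (h : ∀ a, μ {a} ≤ ν {a}) : μ ≤ ν := by
  intro s
  rw [← Measure.sum_smul_dirac μ, ← Measure.sum_smul_dirac ν,
    Measure.sum_apply _ (Set.to_countable s).measurableSet,
    Measure.sum_apply _ (Set.to_countable s).measurableSet]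
  exact ENNReal.tsum_le_tsum fun a => by
    simp only [Measure.smul_apply, smul_eq_mul]
    exact mul_le_mul_left (h a) _

namespace ProbabilityTheory

theorem iIndepFun.measure_sum_ge_le_exp_mul_prod_mgf {Ω ι : Type*} [MeasurableSpace Ω]
    {μ : Measure Ω} [Fintype ι] {Y : ι → Ω → ℝ} (hindep : iIndepFun Y μ)
    (hY : ∀ i, Measurable (Y i)) {t : ℝ} (ht : 0 ≤ t)
    (hint : ∀ i, Integrable (fun ω => exp (t * Y i ω)) μ) (a : ℝ) :
    μ.real {ω | a ≤ ∑ i, Y i ω} ≤ exp (-t * a) * ∏ i, mgf (Y i) μ t := by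
  have := hindep.isProbabilityMeasure
  rw [← hindep.mgf_sum hY]
  simpa only [Finset.sum_apply] using
    measure_ge_le_exp_mul_mgf a ht (hindep.integrable_exp_mul_sum hY fun i _ => hint i)

variable {Ω : Type*} [MeasurableSpace Ω] {μ : Measure Ω} [IsProbabilityMeasure μ]
  {X : Ω → ℕ}

/- `geometricMeasure` counts the failures before the first success, `X` the trials up to and
including it. -/
theorem map_eq_map_succ_geometricMeasure (hX : Measurable X) {p : unitInterval} (hp : p ≠ 0)
    (hgeom : ∀ k : ℕ, 1 ≤ k → μ {ω | X ω = k} = ENNReal.ofReal (p * (1 - p) ^ (k - 1))) :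
    μ.map X = (geometricMeasure p).map (· + 1) := by
  have : IsProbabilityMeasure (μ.map X) := Measure.isProbabilityMeasure_map hX.aemeasurable
  have : IsProbabilityMeasure ((geometricMeasure p).map (· + 1)) :=
    Measure.isProbabilityMeasure_map (measurable_of_countable _).aemeasurable
  refine (Measure.eq_of_le_of_isProbabilityMeasure
    (Measure.le_of_forall_measure_singleton_le fun k => ?_)).symm
  rw [Measure.map_apply (measurable_of_countable _) (measurableSet_singleton k),
    Measure.map_apply hX (measurableSet_singleton k)]
  cases k with
  | zero =>
    have hpre : (· + 1) ⁻¹' {0} = (∅ : Set ℕ) := by ext; simp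
    simp [hpre]
  | succ j =>
    have hpre : (· + 1) ⁻¹' {j + 1} = {j} := by ext; simp
    rw [hpre, geometricMeasure_singleton hp]
    change _ ≤ μ {ω | X ω = j + 1}
    rw [hgeom (j + 1) (by omega), add_tsub_cancel_right, mul_comm]

variable {p t : ℝ}

theorem hasSum_geometric_mul_exp (hp1 : p ≤ 1) (ht : (1 - p) * exp t < 1) :
    HasSum (fun n : ℕ => (1 - p) ^ n * p * exp (t * (n + 1 : ℕ)))
      (p * exp t / (1 - (1 - p) * exp t)) := by
  have hseries := hasSum_geometric_of_lt_one (mul_nonneg (sub_nonneg.2 hp1) (exp_pos t).le) ht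
  have hterm : (fun n : ℕ => (1 - p) ^ n * p * exp (t * (n + 1 : ℕ)))
      = fun n => p * exp t * ((1 - p) * exp t) ^ n := by
    ext n
    rw [Nat.cast_succ, mul_add_one, exp_add, mul_comm t, exp_nat_mul, mul_pow]
    ring
  rw [hterm, div_eq_mul_inv]
  exact hseries.mul_left (p * exp t)

theorem integrable_exp_mul_of_geometric (hX : Measurable X) (hp0 : 0 < p) (hp1 : p ≤ 1)
    (hgeom : ∀ k : ℕ, 1 ≤ k → μ {ω | X ω = k} = ENNReal.ofReal (p * (1 - p) ^ (k - 1)))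
    (ht : (1 - p) * exp t < 1) :
    Integrable (fun ω => exp (t * X ω)) μ := by
  let q : unitInterval := ⟨p, hp0.le, hp1⟩
  have hq : q ≠ 0 := fun h => hp0.ne' (congrArg Subtype.val h)
  refine Integrable.comp_measurable (g := fun n : ℕ => exp (t * n)) ?_ hX
  rw [map_eq_map_succ_geometricMeasure hX hq hgeom,
    integrable_map_measure (by fun_prop) (by fun_prop), Function.comp_def,
    integrable_geometricMeasure_iff hq]
  simpa [abs_of_pos (exp_pos _)] using (hasSum_geometric_mul_exp hp1 ht).summable

theorem mgf_eq_of_geometric (hX : Measurable X) (hp0 : 0 < p) (hp1 : p ≤ 1)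
    (hgeom : ∀ k : ℕ, 1 ≤ k → μ {ω | X ω = k} = ENNReal.ofReal (p * (1 - p) ^ (k - 1)))
    (ht : (1 - p) * exp t < 1) :
    mgf (fun ω => (X ω : ℝ)) μ t = p * exp t / (1 - (1 - p) * exp t) := by
  let q : unitInterval := ⟨p, hp0.le, hp1⟩
  have hq : q ≠ 0 := fun h => hp0.ne' (congrArg Subtype.val h)
  have hdisc {ν : Measure ℕ} {f : ℕ → ℝ} : AEStronglyMeasurable f ν :=
    (measurable_of_countable f).aestronglyMeasurable
  rw [show (fun ω => (X ω : ℝ)) = Nat.cast ∘ X from rfl, ← mgf_map hX.aemeasurable hdisc,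
    map_eq_map_succ_geometricMeasure hX hq hgeom,
    mgf_map (measurable_of_countable _).aemeasurable hdisc, mgf,
    integral_geometricMeasure hq]
  exact (hasSum_geometric_mul_exp hp1 ht).tsum_eq

theorem mgf_neg_log_one_sub_of_geometric {u : ℝ} (hX : Measurable X) (hp0 : 0 < p) (hp1 : p ≤ 1)
    (hgeom : ∀ k : ℕ, 1 ≤ k → μ {ω | X ω = k} = ENNReal.ofReal (p * (1 - p) ^ (k - 1)))
    (hup : u < p) :
    mgf (fun ω => (X ω : ℝ)) μ (-log (1 - u)) = (1 - u / p)⁻¹ := by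
  rw [mgf_eq_of_geometric hX hp0 hp1 hgeom (one_sub_mul_exp_neg_log_one_sub_lt_one hup hp1),
    exp_neg, exp_log (by linarith)]
  have hu : 1 - u ≠ 0 := by linarith
  have hden : 1 - (1 - p) * (1 - u)⁻¹ = (p - u) / (1 - u) := by field_simp; ring
  have hinv : 1 - u / p = (p - u) / p := by field_simp
  rw [hden, hinv, inv_div, ← div_eq_mul_inv, div_div_div_cancel_right₀ hu]

theorem measure_sum_ge_le_exp_of_geometric {ι : Type*} [Fintype ι] {X : ι → Ω → ℕ}
    {p : ι → ℝ} {pmin l : ℝ} (hX : ∀ i, Measurable (X i)) (hindep : iIndepFun X μ)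
    (hp0 : ∀ i, 0 < p i) (hp1 : ∀ i, p i ≤ 1)
    (hgeom : ∀ i, ∀ k : ℕ, 1 ≤ k →
      μ {ω | X i ω = k} = ENNReal.ofReal (p i * (1 - p i) ^ (k - 1)))
    (hpmin : 0 ≤ pmin) (hple : ∀ i, pmin ≤ p i) (hl : 0 ≤ l) :
    μ.real {ω | (1 + l) * ∑ i, 1 / p i ≤ ∑ i, (X i ω : ℝ)} ≤
      exp (-(pmin * (∑ i, 1 / p i) * (l - log (1 + l)))) := by
  rcases isEmpty_or_nonempty ι with _ | ⟨⟨i₀⟩⟩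
  · simp
  set m := ∑ i, 1 / p i
  set c := l / (1 + l)
  set u := pmin * c
  set t := -log (1 - u)
  have hm : 0 ≤ m := Finset.sum_nonneg fun i _ => (one_div_pos.2 (hp0 i)).le
  have hc0 : 0 ≤ c := by positivity
  have hc1 : c < 1 := (div_lt_one (by linarith)).2 (by linarith)
  have hu0 : 0 ≤ u := mul_nonneg hpmin hc0
  have hu_lt (i : ι) : u < p i :=
    (mul_le_mul_of_nonneg_right (hple i) hc0).trans_lt (mul_lt_of_lt_one_right (hp0 i) hc1)
  have hut : u ≤ t := by
    linarith [log_le_sub_one_of_pos (by linarith [hu_lt i₀, hp1 i₀] : 0 < 1 - u)]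
  have hlt : pmin * l * m ≤ t * ((1 + l) * m) := by
    have hul : u * (1 + l) = pmin * l := by simp only [u, c]; field_simp
    rw [← hul, mul_assoc]
    exact mul_le_mul_of_nonneg_right hut (by positivity)
  have hmgf (i : ι) : mgf (fun ω => (X i ω : ℝ)) μ t ≤ (1 + l) ^ (pmin / p i) := by
    rw [mgf_neg_log_one_sub_of_geometric (hX i) (hp0 i) (hp1 i) (hgeom i) (hu_lt i),
      mul_div_right_comm]
    exact inv_one_sub_mul_div_le_rpow hl (div_nonneg hpmin (hp0 i).le)
      (div_le_one_of_le₀ (hple i) (hp0 i).le)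
  have hYindep : iIndepFun (fun i ω => (X i ω : ℝ)) μ :=
    hindep.comp (fun _ (k : ℕ) => (k : ℝ)) fun _ => measurable_from_nat
  calc μ.real {ω | (1 + l) * m ≤ ∑ i, (X i ω : ℝ)}
      ≤ exp (-t * ((1 + l) * m)) * ∏ i, mgf (fun ω => (X i ω : ℝ)) μ t :=
      hYindep.measure_sum_ge_le_exp_mul_prod_mgf (fun i => measurable_from_nat.comp (hX i))
        (hu0.trans hut) (fun i => integrable_exp_mul_of_geometric (hX i) (hp0 i) (hp1 i) (hgeom i)
          (one_sub_mul_exp_neg_log_one_sub_lt_one (hu_lt i) (hp1 i))) _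
    _ ≤ exp (-t * ((1 + l) * m)) * ∏ i, (1 + l) ^ (pmin / p i) :=
      mul_le_mul_of_nonneg_left (Finset.prod_le_prod (fun _ _ => mgf_nonneg) fun i _ => hmgf i)
        (exp_nonneg _)
    _ = exp (-t * ((1 + l) * m) + log (1 + l) * (pmin * m)) := by
      rw [← rpow_sum_of_pos (by linarith), rpow_def_of_pos (by linarith), exp_add]
      simp only [m, Finset.mul_sum, mul_one_div]
    _ ≤ exp (-(pmin * m * (l - log (1 + l)))) := by
      gcongr
      linarith

end ProbabilityTheory

/-- Chernoff-type upper-tail bound for sums of independent geometric random variables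
(Inequality (3) in the paper's Lemma 1): if `X 1, …, X n` are independent geometric
random variables, `X i` with success probability `p i ∈ (0,1]` and `p i ≥ p_min > 0`,
and `m = E[∑ i, X i] = ∑ i, 1 / p i`, then for every `ε ∈ (0,1)`,
`Pr[∑ i, X i > (1 + ε/2) * m] ≤ exp (-p_min * m * ε² / 24)`. -/
theorem chernoff_upper_tail_geometric_sum
    {Ω : Type*} [MeasurableSpace Ω] (μ : Measure Ω) [IsProbabilityMeasure μ]
    (n : ℕ) (p : Fin n → ℝ) (hp : ∀ i, 0 < p i ∧ p i ≤ 1)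
    (pmin : ℝ) (hpmin : 0 < pmin) (hple : ∀ i, pmin ≤ p i)
    (X : Fin n → Ω → ℕ) (hXmeas : ∀ i, Measurable (X i))
    (hindep : iIndepFun X μ)
    (hgeom : ∀ i, ∀ k : ℕ, 1 ≤ k →
      μ {ω | X i ω = k} = ENNReal.ofReal (p i * (1 - p i) ^ (k - 1)))
    (ε : ℝ) (hε : ε ∈ Set.Ioo (0 : ℝ) 1) :
    (μ {ω | (1 + ε / 2) * (∑ i, 1 / p i) < ∑ i, (X i ω : ℝ)}).toReal
      ≤ Real.exp (-(pmin * (∑ i, 1 / p i) * ε ^ 2) / 24) := by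
  obtain ⟨hε0, hε1⟩ := hε
  have hm : 0 ≤ ∑ i, 1 / p i := Finset.sum_nonneg fun i _ => (one_div_pos.2 (hp i).1).le
  have hgap := sq_div_six_le_sub_log_one_add (x := ε / 2) (by positivity) (by linarith)
  calc (μ {ω | (1 + ε / 2) * (∑ i, 1 / p i) < ∑ i, (X i ω : ℝ)}).toReal
      ≤ μ.real {ω | (1 + ε / 2) * (∑ i, 1 / p i) ≤ ∑ i, (X i ω : ℝ)} :=
        measureReal_mono (Set.ofPred_subset_ofPred.2 fun _ => le_of_lt)
    _ ≤ exp (-(pmin * (∑ i, 1 / p i) * (ε / 2 - log (1 + ε / 2)))) :=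
        measure_sum_ge_le_exp_of_geometric hXmeas hindep (fun i => (hp i).1) (fun i => (hp i).2)
          hgeom hpmin.le hple (by positivity)
    _ ≤ exp (-(pmin * (∑ i, 1 / p i) * ε ^ 2) / 24) := by
      gcongr
      linarith [mul_le_mul_of_nonneg_left hgap (mul_nonneg hpmin.le hm)]
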